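/- arXiv:2307.13155 — 5 statements merged into one kernel-verified Lean document; each statement's English description precedes it below -/
import Mathlib

section
/- Let Γ be a countable group. The following are equivalent: (1) Γ is LEF; (2) there exists a separating partial homomorphism φ_n : Γ → Sym(k_n), i.e. a partial homomorphism such that liminf_n d_Hamm(φ_n(g), id) > 0 for every g ≠ e; (3) there exists a separating partial homomorphism φ_n : Γ → U(k_n), i.e. a partial homomorphism such that liminf_n ‖φ_n(g) − 1‖₂ > 0 for every g ≠ e. -/
open Filter Matrix
open scoped ComplexOrder

noncomputable section

/-- The group of `k × k` complex unitary matrices. -/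
abbrev UGp (k : ℕ) := Matrix.unitaryGroup (Fin k) ℂ

/-- The normalized Hilbert–Schmidt distance `‖A - B‖₂ = (τ_k((A-B)*(A-B)))^{1/2}`
on `k × k` complex matrices, where `τ_k` is the normalized trace. -/
def hsDist (k : ℕ) (A B : Matrix (Fin k) (Fin k) ℂ) : ℝ :=
  Real.sqrt ((Matrix.trace ((A - B)ᴴ * (A - B))).re / k)

/-- The normalized trace `τ_k = (1/k)·Tr` on `k × k` complex matrices. -/
def nTrace (k : ℕ) (A : Matrix (Fin k) (Fin k) ℂ) : ℂ :=
  Matrix.trace A / k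

/-- The normalized Hamming distance on the symmetric group `Sym(k)`. -/
def hammDist (k : ℕ) (σ τ : Equiv.Perm (Fin k)) : ℝ :=
  (Finset.univ.filter fun i => σ i ≠ τ i).card / k

/-- A sequence of maps `φ_n : Γ → G_n` is a partial homomorphism if for all `g, h ∈ Γ`
there is `N` with `φ_n(gh) = φ_n(g)φ_n(h)` for all `n ≥ N`. -/
def IsPartialHom {Γ : Type*} [Group Γ] {G : ℕ → Type*} [∀ n, Group (G n)]
    (φ : ∀ n, Γ → G n) : Prop :=
  ∀ g h : Γ, ∃ N : ℕ, ∀ n ≥ N, φ n (g * h) = φ n g * φ n h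

/-- An approximate homomorphism into the unitary groups `U(k_n)` with the
normalized Hilbert–Schmidt distance. -/
def IsApproxHomU {Γ : Type*} [Group Γ] (k : ℕ → ℕ)
    (φ : ∀ n, Γ → UGp (k n)) : Prop :=
  ∀ g h : Γ,
    Tendsto (fun n => hsDist (k n) (φ n (g * h)) (φ n g * φ n h)) atTop (nhds 0)

/-- Two sequences of maps into the unitary groups `U(k_n)` are close if
`‖φ_n(g) - ψ_n(g)‖₂ → 0` for every `g`. -/
def CloseU {Γ : Type*} [Group Γ] (k : ℕ → ℕ) (φ ψ : ∀ n, Γ → UGp (k n)) : Prop :=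
  ∀ g : Γ, Tendsto (fun n => hsDist (k n) (φ n g) (ψ n g)) atTop (nhds 0)

/-- A group is locally HS-stable if every approximate homomorphism into unitary
groups (with normalized Hilbert–Schmidt distance) is close to a partial homomorphism. -/
def LocallyHSStable (Γ : Type*) [Group Γ] : Prop :=
  ∀ (k : ℕ → ℕ) (φ : ∀ n, Γ → UGp (k n)), IsApproxHomU k φ →
    ∃ ψ : ∀ n, Γ → UGp (k n), IsPartialHom ψ ∧ CloseU k φ ψ

/-- A group `Γ` is LEF if every finite subset `B ⊆ Γ` admits a map to a finite group
which is injective on `B` and multiplicative on `B`. -/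
def IsLEF (Γ : Type*) [Group Γ] : Prop :=
  ∀ B : Finset Γ, ∃ (F : Type) (_ : Group F) (_ : Finite F) (φ : Γ → F),
    Set.InjOn φ ↑B ∧ ∀ g ∈ B, ∀ h ∈ B, φ (g * h) = φ g * φ h

/-- A group is MAP if finite-dimensional unitary representations separate points. -/
def IsMAP (Γ : Type*) [Group Γ] : Prop :=
  ∀ g : Γ, g ≠ 1 → ∃ (k : ℕ) (π : Γ →* UGp k), π g ≠ 1

/-- A group is hyperlinear if it admits a separating approximate homomorphism into
the unitary groups with the normalized Hilbert–Schmidt distance. -/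
def IsHyperlinear (Γ : Type*) [Group Γ] : Prop :=
  ∃ (k : ℕ → ℕ) (φ : ∀ n, Γ → UGp (k n)), IsApproxHomU k φ ∧
    ∀ g : Γ, g ≠ 1 → 0 < Filter.liminf (fun n => hsDist (k n) (φ n g) 1) atTop

/-- The top-left `k × k` corner of an `m × m` matrix. -/
def corner {k m : ℕ} (h : k ≤ m) (A : Matrix (Fin m) (Fin m) ℂ) :
    Matrix (Fin k) (Fin k) ℂ :=
  A.submatrix (Fin.castLE h) (Fin.castLE h)

/-- Very flexible local HS-stability: every approximate homomorphism
`φ_n : Γ → U(k_n)` is close (in the corner sense) to a partial homomorphism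
`ψ_n : Γ → U(m_n)` for some `m_n ≥ k_n`. -/
def VeryFlexiblyLocallyHSStable (Γ : Type*) [Group Γ] : Prop :=
  ∀ (k : ℕ → ℕ) (φ : ∀ n, Γ → UGp (k n)), IsApproxHomU k φ →
    ∃ (m : ℕ → ℕ) (hm : ∀ n, k n ≤ m n) (ψ : ∀ n, Γ → UGp (m n)),
      IsPartialHom ψ ∧
      ∀ g : Γ, Tendsto (fun n => hsDist (k n) (φ n g) (corner (hm n) (ψ n g)))
        atTop (nhds 0)

/-- Flexible local HS-stability: as in the very flexible version, but requiring
`m_n / k_n → 1`. -/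
def FlexiblyLocallyHSStable (Γ : Type*) [Group Γ] : Prop :=
  ∀ (k : ℕ → ℕ) (φ : ∀ n, Γ → UGp (k n)), IsApproxHomU k φ →
    ∃ (m : ℕ → ℕ) (hm : ∀ n, k n ≤ m n),
      Tendsto (fun n => (m n : ℝ) / k n) atTop (nhds 1) ∧
      ∃ ψ : ∀ n, Γ → UGp (m n), IsPartialHom ψ ∧
        ∀ g : Γ, Tendsto (fun n => hsDist (k n) (φ n g) (corner (hm n) (ψ n g)))
          atTop (nhds 0)

/-- A hyperlinear approximation: an approximate homomorphism into unitary groups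
with `‖φ_n(g) - 1‖₂ → √2` for every `g ≠ e`. -/
def IsHyperlinearApprox {Γ : Type*} [Group Γ] (k : ℕ → ℕ)
    (φ : ∀ n, Γ → UGp (k n)) : Prop :=
  IsApproxHomU k φ ∧
    ∀ g : Γ, g ≠ 1 →
      Tendsto (fun n => hsDist (k n) (φ n g) 1) atTop (nhds (Real.sqrt 2))

/-- Weak HS-stability: every hyperlinear approximation is close to a sequence of
genuine homomorphisms. -/
def WeaklyHSStable (Γ : Type*) [Group Γ] : Prop :=
  ∀ (k : ℕ → ℕ) (φ : ∀ n, Γ → UGp (k n)), IsHyperlinearApprox k φ →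
    ∃ ψ : ∀ n, Γ →* UGp (k n), CloseU k φ (fun n g => ψ n g)

/-- Weak local HS-stability: every hyperlinear approximation is close to a
partial homomorphism. -/
def WeaklyLocallyHSStable (Γ : Type*) [Group Γ] : Prop :=
  ∀ (k : ℕ → ℕ) (φ : ∀ n, Γ → UGp (k n)), IsHyperlinearApprox k φ →
    ∃ ψ : ∀ n, Γ → UGp (k n), IsPartialHom ψ ∧ CloseU k φ ψ

/-- A group is amenable if it admits a left-invariant mean, here formulated as a
left-invariant finitely additive probability measure defined on all subsets
(equivalently, a left-invariant mean on `ℓ^∞(Γ)`). -/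
def IsAmenable (Γ : Type*) [Group Γ] : Prop :=
  ∃ m : Set Γ → ℝ,
    (∀ A : Set Γ, 0 ≤ m A) ∧ m Set.univ = 1 ∧
    (∀ A B : Set Γ, Disjoint A B → m (A ∪ B) = m A + m B) ∧
    (∀ (g : Γ) (A : Set Γ), m ((g * ·) '' A) = m A)

/-- A character of `Γ`: a positive definite, conjugation-invariant function with
`χ(e) = 1`. -/
def IsCharacter {Γ : Type*} [Group Γ] (χ : Γ → ℂ) : Prop :=
  (∀ (m : ℕ) (g : Fin m → Γ), (Matrix.of fun i j => χ ((g i)⁻¹ * g j)).PosSemidef) ∧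
    (∀ g h : Γ, χ (g * h) = χ (h * g)) ∧ χ 1 = 1

/-- An extremal character: one that cannot be written as a nontrivial convex
combination of characters. -/
def IsExtremalCharacter {Γ : Type*} [Group Γ] (χ : Γ → ℂ) : Prop :=
  IsCharacter χ ∧
    ∀ (t : ℝ) (χ₁ χ₂ : Γ → ℂ), 0 < t → t < 1 → IsCharacter χ₁ → IsCharacter χ₂ →
      (∀ g : Γ, χ g = (t : ℂ) * χ₁ g + (1 - (t : ℂ)) * χ₂ g) → χ₁ = χ ∧ χ₂ = χ

/-- An approximate homomorphism into the symmetric groups `Sym(k_n)` with the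
normalized Hamming distance. -/
def IsApproxHomP {Γ : Type*} [Group Γ] (k : ℕ → ℕ)
    (φ : ∀ n, Γ → Equiv.Perm (Fin (k n))) : Prop :=
  ∀ g h : Γ,
    Tendsto (fun n => hammDist (k n) (φ n (g * h)) (φ n g * φ n h)) atTop (nhds 0)

/-- A group is locally P-stable if every approximate homomorphism into symmetric
groups (with normalized Hamming distance) is close to a partial homomorphism. -/
def LocallyPStable (Γ : Type*) [Group Γ] : Prop :=
  ∀ (k : ℕ → ℕ) (φ : ∀ n, Γ → Equiv.Perm (Fin (k n))), IsApproxHomP k φ →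
    ∃ ψ : ∀ n, Γ → Equiv.Perm (Fin (k n)), IsPartialHom ψ ∧
      ∀ g : Γ, Tendsto (fun n => hammDist (k n) (φ n g) (ψ n g)) atTop (nhds 0)

/-- A group is finitely presented if it is the quotient of a finitely generated
free group by the normal closure of finitely many relators. -/
def IsFinitelyPresented (Γ : Type*) [Group Γ] : Prop :=
  ∃ (n : ℕ) (π : FreeGroup (Fin n) →* Γ) (R : Finset (FreeGroup (Fin n))),
    Function.Surjective π ∧ π.ker = Subgroup.normalClosure (R : Set (FreeGroup (Fin n)))

/-!
(1) ⇒ (2): exhaust `Γ` by finite sets `B_n`, take the finite groups `F_n` given by LEF for `B_n`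
and follow the local embeddings `Γ → F_n` by the left regular representations of `F_n`. A
nontrivial element of `F_n` acts without fixed points, so its Hamming distance from the identity
is `1`.

(2) ⇒ (3): pass to permutation matrices, for which `‖P_σ - 1‖₂² = 2 d_Hamm(σ, id)`.

(3) ⇒ (1): for large `n` a separating partial homomorphism is injective and multiplicative on any
given finite set, so it suffices that `U(k)` is LEF. This is Malcev's argument: the entries of
finitely many unitaries generate, together with their conjugates, a finitely generated domain
`A ⊆ ℂ` stable under conjugation. As `ℤ` is a Jacobson ring, the maximal ideals of `A` have finite
residue fields and intersect in `0`, so one of them misses the product of the differences of those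
entries. Reducing modulo it maps the unitaries (whose inverses are again over `A`) injectively
and multiplicatively into `GL_k` of a finite field.
-/

universe u

def IsLocalEmbeddingOn {G H : Type*} [Mul G] [Mul H] (φ : G → H) (B : Set G) : Prop :=
  B.InjOn φ ∧ ∀ g ∈ B, ∀ h ∈ B, φ (g * h) = φ g * φ h

theorem IsLocalEmbeddingOn.comp {G H K : Type*} [Mul G] [Mul H] [Mul K] {ρ : H → K} {φ : G → H}
    {B : Set G} (hρ : IsLocalEmbeddingOn ρ (φ '' B)) (hφ : IsLocalEmbeddingOn φ B) :
    IsLocalEmbeddingOn (ρ ∘ φ) B := by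
  refine ⟨hρ.1.comp hφ.1 (Set.mapsTo_image φ B), fun g hg h hh => ?_⟩
  rw [Function.comp_apply, hφ.2 g hg h hh,
    hρ.2 _ (Set.mem_image_of_mem φ hg) _ (Set.mem_image_of_mem φ hh)]
  rfl

theorem isLocalEmbeddingOn_comp_invFun {G H K : Type*} [Monoid G] [Monoid H] [Monoid K]
    (ι : H →* G) (hι : Function.Injective ι) (ρ : H →* K) {B : Set G} (hB : B ⊆ Set.range ι)
    (hρ : (ι ⁻¹' B).InjOn ρ) : IsLocalEmbeddingOn (ρ ∘ Function.invFun ι) B := by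
  have hinv := Function.leftInverse_invFun hι
  refine ⟨fun g hg h hh hgh => ?_, fun g hg h hh => ?_⟩
  · obtain ⟨a, rfl⟩ := hB hg
    obtain ⟨b, rfl⟩ := hB hh
    simp only [Function.comp_apply, hinv a, hinv b] at hgh
    rw [hρ hg hh hgh]
  · obtain ⟨a, rfl⟩ := hB hg
    obtain ⟨b, rfl⟩ := hB hh
    simp only [Function.comp_apply, ← map_mul ρ, ← map_mul ι]
    rw [hinv, hinv, hinv]

theorem isLEF_of_forall_isLocalEmbeddingOn {Γ ι : Type*} [Group Γ] {G : ι → Type*}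
    [∀ i, Group (G i)] (hG : ∀ i, IsLEF (G i))
    (h : ∀ B : Finset Γ, ∃ i, ∃ φ : Γ → G i, IsLocalEmbeddingOn φ B) : IsLEF Γ := by
  classical
  intro B
  obtain ⟨i, φ, hφ⟩ := h B
  obtain ⟨F, _, _, ρ, hρ⟩ := hG i (B.image φ)
  exact ⟨F, _, ‹_›, ρ ∘ φ, IsLocalEmbeddingOn.comp (by simpa [IsLocalEmbeddingOn] using hρ) hφ⟩

section PartialHom

variable {Γ : Type*} [Group Γ] {G : ℕ → Type*} [∀ n, Group (G n)] {φ : ∀ n, Γ → G n}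

theorem IsPartialHom.eventually_map_mul (hφ : IsPartialHom φ) (g h : Γ) :
    ∀ᶠ n in atTop, φ n (g * h) = φ n g * φ n h :=
  eventually_atTop.mpr (hφ g h)

theorem IsPartialHom.comp_monoidHom (hφ : IsPartialHom φ) {H : ℕ → Type*} [∀ n, Group (H n)]
    (ρ : ∀ n, G n →* H n) : IsPartialHom fun n g => ρ n (φ n g) := fun g h =>
  (hφ g h).imp fun _ hN n hn => by simp only [hN n hn, map_mul]

theorem IsPartialHom.eventually_isLocalEmbeddingOn (hφ : IsPartialHom φ)
    (hsep : ∀ g : Γ, g ≠ 1 → ∀ᶠ n in atTop, φ n g ≠ 1) (B : Finset Γ) :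
    ∀ᶠ n in atTop, IsLocalEmbeddingOn (φ n) B := by
  have hne : ∀ g h : Γ, g ≠ h → ∀ᶠ n in atTop, φ n g ≠ φ n h := fun g h hgh => by
    -- eventually `φ n h = φ n g * φ n (g⁻¹ * h)` with `φ n (g⁻¹ * h) ≠ 1`
    filter_upwards [hφ.eventually_map_mul g (g⁻¹ * h), hsep _ (inv_mul_eq_one.not.mpr hgh)]
      with n hmul h1 heq
    rw [mul_inv_cancel_left, heq, left_eq_mul] at hmul
    exact h1 hmul
  have hpair : ∀ g h : Γ, ∀ᶠ n in atTop,
      φ n (g * h) = φ n g * φ n h ∧ (g ≠ h → φ n g ≠ φ n h) := fun g h => by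
    refine (hφ.eventually_map_mul g h).and ?_
    by_cases hgh : g = h
    · exact .of_forall fun _ hne => absurd hgh hne
    · exact (hne g h hgh).mono fun _ h' _ => h'
  filter_upwards [(B.eventually_all).mpr fun g _ => (B.eventually_all).mpr fun h _ => hpair g h]
    with n hn
  exact ⟨fun g hg h hh hgh => by_contra fun hne => (hn g hg h hh).2 hne hgh,
    fun g hg h hh => (hn g hg h hh).1⟩

theorem isLEF_of_partialHom (hG : ∀ n, IsLEF (G n)) (hφ : IsPartialHom φ)
    (hsep : ∀ g : Γ, g ≠ 1 → ∀ᶠ n in atTop, φ n g ≠ 1) : IsLEF Γ :=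
  isLEF_of_forall_isLocalEmbeddingOn hG fun B =>
    (hφ.eventually_isLocalEmbeddingOn hsep B).exists.imp fun n h => ⟨φ n, h⟩

theorem IsLEF.exists_partialHom [Countable Γ] (hΓ : IsLEF Γ) :
    ∃ (F : ℕ → Type) (_ : ∀ n, Group (F n)) (_ : ∀ n, Finite (F n)) (φ : ∀ n, Γ → F n),
      IsPartialHom φ ∧ ∀ g : Γ, g ≠ 1 → ∀ᶠ n in atTop, φ n g ≠ 1 := by
  classical
  obtain ⟨e, he⟩ := exists_surjective_nat Γ
  have hB : ∀ g : Γ, ∀ᶠ n in atTop, g ∈ (Finset.range n).image e := fun g => by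
    obtain ⟨i, rfl⟩ := he g
    exact eventually_atTop.mpr ⟨i + 1, fun n hn => Finset.mem_image_of_mem e
      (Finset.mem_range.mpr (by omega))⟩
  choose F _ _ φ hφ using fun n => hΓ ((Finset.range n).image e)
  have hmul : ∀ g h : Γ, ∀ᶠ n in atTop, φ n (g * h) = φ n g * φ n h := fun g h => by
    filter_upwards [hB g, hB h] with n hg hh using (hφ n).2 g hg h hh
  refine ⟨F, _, ‹_›, φ, fun g h => eventually_atTop.mp (hmul g h), fun g hg => ?_⟩
  filter_upwards [hB g, hB 1, hmul 1 1] with n hgn h1n hφ1 hφg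
  rw [one_mul, left_eq_mul] at hφ1
  exact hg ((hφ n).1 hgn h1n (hφg.trans hφ1.symm))

end PartialHom

instance Int.instIsJacobsonRing : IsJacobsonRing ℤ := by
  rw [isJacobsonRing_iff_prime_eq]
  intro P hP
  rcases eq_or_ne P ⊥ with rfl | hP0
  · refine le_antisymm (fun x hx => ?_) Ideal.le_jacobson
    -- `x * x + 1` is a unit only for `x = 0`
    have hunit := Ideal.mem_jacobson_bot.mp hx x
    rw [Int.isUnit_iff] at hunit
    rw [Ideal.mem_bot]
    rcases hunit with h | h <;> nlinarith
  · have := hP.isMaximal hP0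
    exact Ideal.jacobson_eq_self_of_isMaximal

theorem Field.finite_of_finiteType_int (K : Type*) [Field K] [Algebra ℤ K]
    [Algebra.FiniteType ℤ K] : Finite K := by
  obtain rfl : ‹Algebra ℤ K› = Ring.toIntAlgebra K := Subsingleton.elim _ _
  -- Zariski's lemma makes `K` a finitely generated abelian group. It is torsion: in
  -- characteristic zero `K` would be a field integral over its subring `ℤ`, forcing `ℤ` to be one.
  have : Module.Finite ℤ K := finite_of_finite_type_of_isJacobsonRing ℤ K
  have hchar : ringChar K ≠ 0 := by
    intro h
    have : CharZero K := (CharP.charP_zero_iff_charZero K).mp (h ▸ ringChar.charP K)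
    exact Int.not_isField ((Algebra.IsIntegral.isField_iff_isField
      (algebraMap ℤ K).injective_int).mpr (Field.toIsField K))
  refine Module.finite_of_fg_torsion K fun x => ⟨⟨ringChar K,
    mem_nonZeroDivisors_of_ne_zero (Int.natCast_ne_zero.mpr hchar)⟩, ?_⟩
  change (ringChar K : ℤ) • x = 0
  simp [zsmul_eq_mul]

theorem exists_ringHom_finite_field_ne_zero {A : Type u} [CommRing A] [IsDomain A]
    [Algebra.FiniteType ℤ A] {a : A} (ha : a ≠ 0) :
    ∃ (K : Type u) (_ : Field K) (_ : Finite K) (ψ : A →+* K), ψ a ≠ 0 := by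
  have : IsJacobsonRing A := isJacobsonRing_of_finiteType (A := ℤ)
  obtain ⟨m, ⟨-, hm⟩, ham⟩ : ∃ m ∈ {J : Ideal A | ⊥ ≤ J ∧ J.IsMaximal}, a ∉ m := by
    by_contra! h
    have : a ∈ (⊥ : Ideal A).jacobson := Ideal.mem_sInf.mpr fun J hJ => h J hJ
    rw [← Ideal.radical_eq_jacobson, Ideal.radical_eq_iff.mpr Ideal.isRadical_bot,
      Ideal.mem_bot] at this
    exact ha this
  let := Ideal.Quotient.field m
  have : Algebra.FiniteType ℤ (A ⧸ m) := .of_surjective _ (Ideal.Quotient.mkₐ_surjective ℤ m)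
  exact ⟨A ⧸ m, _, Field.finite_of_finiteType_int _, Ideal.Quotient.mk m,
    by rwa [Ne, Ideal.Quotient.eq_zero_iff_mem]⟩

theorem exists_ringHom_finite_field_injOn {A : Type u} [CommRing A] [IsDomain A]
    [Algebra.FiniteType ℤ A] {s : Set A} (hs : s.Finite) :
    ∃ (K : Type u) (_ : Field K) (_ : Finite K) (ψ : A →+* K), s.InjOn ψ := by
  classical
  set pairs := (hs.toFinset ×ˢ hs.toFinset).filter fun p => p.1 ≠ p.2
  have hprod : ∏ p ∈ pairs, (p.1 - p.2) ≠ 0 :=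
    Finset.prod_ne_zero_iff.mpr fun p hp => sub_ne_zero.mpr (Finset.mem_filter.mp hp).2
  obtain ⟨K, _, _, ψ, hψ⟩ := exists_ringHom_finite_field_ne_zero hprod
  refine ⟨K, _, ‹_›, ψ, fun x hx y hy hxy => by_contra fun hne => ?_⟩
  rw [map_prod, Finset.prod_ne_zero_iff] at hψ
  exact hψ (x, y) (by simp [pairs, hx, hy, hne]) (by rw [map_sub, hxy, sub_self])

section Unitary

variable {n : Type} [Fintype n] [DecidableEq n]

def StarSubalgebra.matrixInclusion (A : StarSubalgebra ℤ ℂ) : Matrix n n A →⋆* Matrix n n ℂ :=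
  { (A.subtype : A →+* ℂ).mapMatrix with
    map_star' := fun M => (conjTranspose_map (f := Subtype.val) (A := M) fun _ => rfl).symm }

theorem StarSubalgebra.matrixInclusion_injective (A : StarSubalgebra ℤ ℂ) :
    Function.Injective (A.matrixInclusion (n := n)) :=
  Matrix.map_injective Subtype.val_injective

theorem StarSubalgebra.mem_range_unitaryMap (A : StarSubalgebra ℤ ℂ) {u : unitaryGroup n ℂ}
    (hu : ∀ i j, (u : Matrix n n ℂ) i j ∈ A) :
    u ∈ Set.range (Unitary.map A.matrixInclusion) := by
  set M : Matrix n n A := of fun i j => ⟨_, hu i j⟩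
  have hM : A.matrixInclusion M = u := rfl
  have hMu : M ∈ unitary (Matrix n n A) := by
    rw [Unitary.mem_iff]
    constructor <;> apply A.matrixInclusion_injective <;> simp [map_mul, map_star, hM]
  exact ⟨⟨M, hMu⟩, Subtype.ext hM⟩

theorem isLEF_unitaryGroup : IsLEF (unitaryGroup n ℂ) := by
  intro B
  let S : Set ℂ := ⋃ u ∈ B, Set.range fun p : n × n => (u : Matrix n n ℂ) p.1 p.2
  have hS : S.Finite := B.finite_toSet.biUnion fun _ _ => Set.finite_range _
  have hentry : ∀ u ∈ B, ∀ i j, (u : Matrix n n ℂ) i j ∈ S := fun u hu i j =>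
    Set.mem_biUnion hu ⟨(i, j), rfl⟩
  let A := StarAlgebra.adjoin ℤ S
  have : Algebra.FiniteType ℤ A := (Subalgebra.fg_iff_finiteType A.toSubalgebra).mp <| by
    rw [StarAlgebra.adjoin_toSubalgebra, ← (hS.union hS.star).coe_toFinset]
    exact Subalgebra.fg_adjoin_finset _
  obtain ⟨K, _, _, ψ, hψ⟩ := exists_ringHom_finite_field_injOn
    (hS.preimage (Subtype.val_injective (p := (· ∈ A))).injOn)
  let ρ : unitary (Matrix n n A) →* (Matrix n n K)ˣ :=
    (Units.map (ψ.mapMatrix (m := n)).toMonoidHom).comp Unitary.toUnits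
  refine ⟨(Matrix n n K)ˣ, inferInstance, inferInstance,
    ρ ∘ Function.invFun (Unitary.map A.matrixInclusion),
    isLocalEmbeddingOn_comp_invFun _ (Unitary.map_injective A.matrixInclusion_injective) ρ
      (fun u hu => A.mem_range_unitaryMap fun i j =>
        StarAlgebra.subset_adjoin ℤ S (hentry u hu i j))
      fun v hv w hw hvw => Subtype.ext <| ext fun i j => ?_⟩
  exact hψ (hentry _ hv i j) (hentry _ hw i j)
    (congrArg (fun x : (Matrix n n K)ˣ => (x : Matrix n n K) i j) hvw)

end Unitary

section Liminf

variable {α : Type*} {l : Filter α} {u : α → ℝ}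

theorem exists_pos_eventually_lt_of_liminf_pos (hu : ∀ a, 0 ≤ u a) (h : 0 < liminf u l) :
    ∃ c > 0, ∀ᶠ a in l, c < u a :=
  ⟨liminf u l / 2, half_pos h,
    eventually_lt_of_lt_liminf (half_lt_self h) (isBoundedUnder_of_eventually_ge (.of_forall hu))⟩

theorem liminf_pos_of_eventually_le [l.NeBot] {b c : ℝ} (hb : ∀ a, u a ≤ b) (hc : 0 < c)
    (h : ∀ᶠ a in l, c ≤ u a) : 0 < liminf u l :=
  hc.trans_le (le_liminf_of_le (isCoboundedUnder_ge_of_le l hb) h)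

theorem liminf_sqrt_two_mul_pos [l.NeBot] (hu₀ : ∀ a, 0 ≤ u a) (hu₁ : ∀ a, u a ≤ 1)
    (h : 0 < liminf u l) : 0 < liminf (fun a => √(2 * u a)) l := by
  obtain ⟨c, hc, hev⟩ := exists_pos_eventually_lt_of_liminf_pos hu₀ h
  refine liminf_pos_of_eventually_le (b := √2) (c := √(2 * c))
    (fun a => Real.sqrt_le_sqrt (by linarith [hu₁ a])) (by positivity) ?_
  filter_upwards [hev] with a ha
  exact Real.sqrt_le_sqrt (by linarith)

end Liminf

theorem hammDist_nonneg (k : ℕ) (σ τ : Equiv.Perm (Fin k)) : 0 ≤ hammDist k σ τ := by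
  unfold hammDist; positivity

theorem hammDist_le_one (k : ℕ) (σ τ : Equiv.Perm (Fin k)) : hammDist k σ τ ≤ 1 :=
  div_le_one_of_le₀ (by simpa using Finset.card_filter_le Finset.univ fun i => σ i ≠ τ i)
    (Nat.cast_nonneg k)

theorem hammDist_one_eq_one {k : ℕ} (hk : k ≠ 0) {σ : Equiv.Perm (Fin k)} (hσ : ∀ i, σ i ≠ i) :
    hammDist k σ 1 = 1 := by
  simp [hammDist, hσ, hk]

theorem hsDist_nonneg (k : ℕ) (A B : Matrix (Fin k) (Fin k) ℂ) : 0 ≤ hsDist k A B :=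
  Real.sqrt_nonneg _

theorem hsDist_self (k : ℕ) (A : Matrix (Fin k) (Fin k) ℂ) : hsDist k A A = 0 := by
  simp [hsDist]

theorem hsDist_one_of_mem_unitaryGroup {k : ℕ} {U : Matrix (Fin k) (Fin k) ℂ}
    (hU : U ∈ unitaryGroup (Fin k) ℂ) : hsDist k U 1 = √(2 * (k - (trace U).re) / k) := by
  have hUU : (U - 1)ᴴ * (U - 1) = 1 + 1 - U - Uᴴ := by
    rw [conjTranspose_sub, conjTranspose_one, sub_mul, mul_sub, mul_sub, ← star_eq_conjTranspose,
      Unitary.star_mul_self_of_mem hU]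
    simp only [mul_one, one_mul, star_eq_conjTranspose]
    abel
  rw [hsDist, hUU, trace_sub, trace_sub, trace_add, trace_conjTranspose, trace_one]
  simp only [Complex.sub_re, Complex.add_re, Complex.star_def, Complex.conj_re, Fintype.card_fin,
    Complex.natCast_re]
  ring_nf

def regularPerm (F : Type*) [Group F] [Finite F] : F →* Equiv.Perm (Fin (Nat.card F)) :=
  (Equiv.permCongrHom (Finite.equivFin F)).toMonoidHom.comp (MulAction.toPermHom F F)

theorem regularPerm_apply_ne {F : Type*} [Group F] [Finite F] {g : F} (hg : g ≠ 1)
    (i : Fin (Nat.card F)) : regularPerm F g i ≠ i := by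
  simp [regularPerm, Equiv.permCongrHom, Equiv.permCongr_apply, ← Equiv.eq_symm_apply, hg]

def permUnitary {n : Type*} [Fintype n] [DecidableEq n] : Equiv.Perm n →* unitaryGroup n ℂ :=
  (permMatrixHom (R := ℂ)).codRestrict (unitary _) fun σ => by
    simp [Unitary.mem_iff, star_eq_conjTranspose, ← permMatrix_mul]

theorem trace_permMatrix_inv {k : ℕ} (σ : Equiv.Perm (Fin k)) :
    trace (σ⁻¹.permMatrix ℂ) = ((Finset.univ.filter fun i => σ i = i).card : ℂ) := by
  rw [← transpose_permMatrix, trace_transpose, trace_permutation]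
  simp [Set.ncard_eq_toFinset_card', Function.fixedPoints, Function.IsFixedPt]

theorem hsDist_permUnitary_one {k : ℕ} (σ : Equiv.Perm (Fin k)) :
    hsDist k (permUnitary σ) 1 = √(2 * hammDist k σ 1) := by
  rw [hsDist_one_of_mem_unitaryGroup (permUnitary σ).2]
  change √(2 * (k - (trace (σ⁻¹.permMatrix ℂ)).re) / k) = _
  have hcard := Finset.card_filter_add_card_filter_not (s := Finset.univ) fun i => σ i = i
  rw [Finset.card_univ, Fintype.card_fin] at hcard
  rw [trace_permMatrix_inv, hammDist, mul_div_assoc]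
  simp only [Equiv.Perm.one_apply, Complex.natCast_re]
  congr 3
  simp only [← hcard, Nat.cast_add, ne_eq, add_sub_cancel_left]
  congr

/-- A countable group is LEF iff it admits a separating partial homomorphism into
the symmetric groups with normalized Hamming distance, iff it admits a separating
partial homomorphism into the unitary groups with normalized Hilbert–Schmidt norm. -/
theorem lef_tfae_separating_partialHom (Γ : Type*) [Group Γ] [Countable Γ] :
    List.TFAE
      [IsLEF Γ,
       ∃ (k : ℕ → ℕ) (φ : ∀ n, Γ → Equiv.Perm (Fin (k n))), IsPartialHom φ ∧
         ∀ g : Γ, g ≠ 1 →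
           0 < Filter.liminf (fun n => hammDist (k n) (φ n g) 1) Filter.atTop,
       ∃ (k : ℕ → ℕ) (φ : ∀ n, Γ → UGp (k n)), IsPartialHom φ ∧
         ∀ g : Γ, g ≠ 1 →
           0 < Filter.liminf (fun n => hsDist (k n) (φ n g) 1) Filter.atTop] := by
  tfae_have 1 → 2 := fun hΓ => by
    obtain ⟨F, _, _, φ, hφ, hsep⟩ := hΓ.exists_partialHom
    refine ⟨fun n => Nat.card (F n), fun n g => regularPerm (F n) (φ n g),
      hφ.comp_monoidHom fun n => regularPerm (F n), fun g hg => ?_⟩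
    refine liminf_pos_of_eventually_le (fun n => hammDist_le_one _ _ _) one_pos ?_
    filter_upwards [hsep g hg] with n hn
    exact (hammDist_one_eq_one Nat.card_pos.ne' (regularPerm_apply_ne hn)).ge
  tfae_have 2 → 3 := fun ⟨k, φ, hφ, hsep⟩ =>
    ⟨k, fun n g => permUnitary (φ n g), hφ.comp_monoidHom fun n => permUnitary, fun g hg => by
      simpa only [hsDist_permUnitary_one] using liminf_sqrt_two_mul_pos
        (fun n => hammDist_nonneg _ _ _) (fun n => hammDist_le_one _ _ _) (hsep g hg)⟩
  tfae_have 3 → 1 := fun ⟨k, φ, hφ, hsep⟩ => by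
    refine isLEF_of_partialHom (fun n => isLEF_unitaryGroup) hφ fun g hg => ?_
    obtain ⟨c, hc, hev⟩ :=
      exists_pos_eventually_lt_of_liminf_pos (fun n => hsDist_nonneg _ _ _) (hsep g hg)
    filter_upwards [hev] with n hn h1
    rw [h1, OneMemClass.coe_one, hsDist_self] at hn
    exact lt_asymm hc hn
  tfae_finish
end
end

section
/- Let Γ be a finitely presented group, let (G_n) be a sequence of groups, and let φ_n : Γ → G_n be a partial homomorphism. Then there exists a sequence of genuine group homomorphisms ψ_n : Γ → G_n such that for every g ∈ Γ there exists N ∈ ℕ with φ_n(g) = ψ_n(g) for all n ≥ N. -/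
open Filter Matrix
open scoped ComplexOrder

noncomputable section

/-! Send each free generator `x` to `φ_n(π x)`. On any fixed word the resulting homomorphism of
the free group agrees with `φ_n ∘ π` for large `n`, since only finitely many products are involved.
In particular the finitely many relators are all sent to `1` for large `n`, and from then on the
homomorphism factors through `π`; for the finitely many small `n` any homomorphism will do. -/

namespace IsPartialHom

variable {Γ : Type*} [Group Γ] {G : ℕ → Type*} [∀ n, Group (G n)] {φ : ∀ n, Γ → G n}

theorem eventually_map_mul_s2 (hφ : IsPartialHom φ) (g h : Γ) :
    ∀ᶠ n in atTop, φ n (g * h) = φ n g * φ n h :=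
  eventually_atTop.2 (hφ g h)

theorem eventually_map_one (hφ : IsPartialHom φ) : ∀ᶠ n in atTop, φ n 1 = 1 := by
  filter_upwards [hφ.eventually_map_mul_s2 1 1] with n hn
  rwa [mul_one, right_eq_mul] at hn

theorem eventually_map_inv (hφ : IsPartialHom φ) (g : Γ) :
    ∀ᶠ n in atTop, φ n g⁻¹ = (φ n g)⁻¹ := by
  filter_upwards [hφ.eventually_map_one, hφ.eventually_map_mul_s2 g g⁻¹] with n h1 hn
  rw [mul_inv_cancel, h1] at hn
  exact eq_inv_of_mul_eq_one_right hn.symm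

theorem eventually_lift_apply {α : Type*} (hφ : IsPartialHom φ) (θ : FreeGroup α →* Γ)
    (w : FreeGroup α) :
    ∀ᶠ n in atTop, FreeGroup.lift (fun a => φ n (θ (FreeGroup.of a))) w = φ n (θ w) := by
  induction w using FreeGroup.induction_on with
  | C1 =>
    filter_upwards [hφ.eventually_map_one] with n hn
    rw [map_one, map_one, hn]
  | of a => exact Eventually.of_forall fun n => FreeGroup.lift_apply_of
  | inv_of a ih =>
    filter_upwards [ih, hφ.eventually_map_inv (θ (FreeGroup.of a))] with n hn hinv
    rw [map_inv, map_inv, hn, hinv]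
  | mul v w ihv ihw =>
    filter_upwards [ihv, ihw, hφ.eventually_map_mul_s2 (θ v) (θ w)] with n hv hw hmul
    rw [map_mul, map_mul, hv, hw, hmul]

theorem eventually_ker_le_ker_lift {α : Type*} (hφ : IsPartialHom φ) (θ : FreeGroup α →* Γ)
    {R : Finset (FreeGroup α)} (hker : θ.ker = Subgroup.normalClosure (R : Set (FreeGroup α))) :
    ∀ᶠ n in atTop, θ.ker ≤ (FreeGroup.lift fun a => φ n (θ (FreeGroup.of a))).ker := by
  have hR : ∀ᶠ n in atTop, ∀ r ∈ R, FreeGroup.lift (fun a => φ n (θ (FreeGroup.of a))) r = 1 := by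
    refine R.eventually_all.2 fun r hr => ?_
    have hθr : θ r = 1 := by
      rw [← θ.mem_ker, hker]
      exact Subgroup.subset_normalClosure hr
    filter_upwards [hφ.eventually_lift_apply θ r, hφ.eventually_map_one] with n hn h1
    rw [hn, hθr, h1]
  filter_upwards [hR] with n hn
  rw [hker]
  exact Subgroup.normalClosure_le_normal hn

end IsPartialHom

/-- Every partial homomorphism of a finitely presented group is eventually equal,
pointwise, to a sequence of genuine homomorphisms. -/
theorem partialHom_eventually_eq_hom {Γ : Type*} [Group Γ] (hΓ : IsFinitelyPresented Γ)
    (G : ℕ → Type*) [∀ n, Group (G n)] (φ : ∀ n, Γ → G n) (hφ : IsPartialHom φ) :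
    ∃ ψ : ∀ n, Γ →* G n, ∀ g : Γ, ∃ N : ℕ, ∀ n ≥ N, φ n g = ψ n g := by
  obtain ⟨m, π, R, hπ, hker⟩ := hΓ
  let f : ∀ n, FreeGroup (Fin m) →* G n := fun n =>
    FreeGroup.lift fun a => φ n (π (FreeGroup.of a))
  refine ⟨fun n => by
    classical exact if h : π.ker ≤ (f n).ker then π.liftOfSurjective hπ ⟨f n, h⟩ else 1, fun g => ?_⟩
  obtain ⟨w, rfl⟩ := hπ g
  rw [← eventually_atTop]
  filter_upwards [hφ.eventually_lift_apply π w, hφ.eventually_ker_le_ker_lift π hker]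
    with n hw hfactors
  rw [dif_pos hfactors, MonoidHom.liftOfRightInverse_comp_apply]
  exact hw.symm

end
end

section
/- Let Γ be a countable group written as a directed union of subgroups (Γ_i)_{i ∈ ℕ}, let G = (G_n, d_n) be a sequence of metric groups, and suppose that each Γ_i is locally G-stable relative to Γ. Then Γ is locally G-stable. In particular, a directed union of locally G-stable groups is locally G-stable. -/
open Filter Matrix
open scoped ComplexOrder

noncomputable section

/-- A sequence of metric groups has bi-invariant metrics if each distance is both
left- and right-invariant. -/
def BiInvariantMetrics (G : ℕ → Type*) [∀ n, Group (G n)] [∀ n, MetricSpace (G n)] : Prop :=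
  ∀ (n : ℕ) (g x y : G n), dist (g * x) (g * y) = dist x y ∧ dist (x * g) (y * g) = dist x y

/-- An approximate homomorphism into a sequence of metric groups:
`d(φ_n(gh), φ_n(g)φ_n(h)) → 0` for all `g, h ∈ Γ`. -/
def IsApproxHomG {Γ : Type*} [Group Γ] (G : ℕ → Type*) [∀ n, Group (G n)]
    [∀ n, MetricSpace (G n)] (k : ℕ → ℕ) (φ : ∀ n, Γ → G (k n)) : Prop :=
  ∀ g h : Γ, Filter.Tendsto (fun n => dist (φ n (g * h)) (φ n g * φ n h)) Filter.atTop (nhds 0)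

/-- Two sequences of maps into a sequence of metric groups are close if the
distances at every group element tend to `0`. -/
def CloseG {Γ : Type*} [Group Γ] (G : ℕ → Type*) [∀ n, Group (G n)]
    [∀ n, MetricSpace (G n)] (k : ℕ → ℕ) (φ ψ : ∀ n, Γ → G (k n)) : Prop :=
  ∀ g : Γ, Filter.Tendsto (fun n => dist (φ n g) (ψ n g)) Filter.atTop (nhds 0)

/-- `Γ` is `G`-stable: every approximate homomorphism is close to a sequence
of genuine homomorphisms. -/
def IsGStable (G : ℕ → Type*) [∀ n, Group (G n)] [∀ n, MetricSpace (G n)]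
    (Γ : Type*) [Group Γ] : Prop :=
  ∀ (k : ℕ → ℕ) (φ : ∀ n, Γ → G (k n)), IsApproxHomG G k φ →
    ∃ ψ : ∀ n, Γ →* G (k n), CloseG G k φ (fun n g => ψ n g)

/-- `Γ` is locally `G`-stable: every approximate homomorphism is close to a
partial homomorphism. -/
def IsLocallyGStable (G : ℕ → Type*) [∀ n, Group (G n)] [∀ n, MetricSpace (G n)]
    (Γ : Type*) [Group Γ] : Prop :=
  ∀ (k : ℕ → ℕ) (φ : ∀ n, Γ → G (k n)), IsApproxHomG G k φ →
    ∃ ψ : ∀ n, Γ → G (k n), IsPartialHom ψ ∧ CloseG G k φ ψ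

/-- A subgroup `H ≤ Γ` is locally `G`-stable relative to `Γ` if for every approximate
homomorphism of `Γ`, the restriction to `H` is close to a partial homomorphism of `H`. -/
def IsLocallyGStableRel (G : ℕ → Type*) [∀ n, Group (G n)] [∀ n, MetricSpace (G n)]
    {Γ : Type*} [Group Γ] (H : Subgroup Γ) : Prop :=
  ∀ (k : ℕ → ℕ) (φ : ∀ n, Γ → G (k n)), IsApproxHomG G k φ →
    ∃ ψ : ∀ n, ↥H → G (k n), IsPartialHom ψ ∧
      ∀ s : ↥H, Filter.Tendsto (fun n => dist (φ n (s : Γ)) (ψ n s)) Filter.atTop (nhds 0)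

/-! Any finite set of pairs `(g, h)` and test points `g` lies in a single `Γ_i`, where the
partial homomorphism supplied by relative stability (extended by `1` off `Γ_i`) is eventually
multiplicative on those pairs and within any prescribed tolerance of `φ`. Encoding pairs and
tolerances `1/(m+1)` as countably many tests `(g, h, m)`, a diagonal choice `i = x(n)`, growing
slowly enough that the `n`-th map already passes all tests with index at most `τ(n)`, gives one
partial homomorphism close to `φ`. -/

open scoped Topology

theorem Nat.exists_tendsto_atTop_eventually_le (N : ℕ → ℕ) :
    ∃ τ : ℕ → ℕ, Tendsto τ atTop atTop ∧ ∀ᶠ n in atTop, N (τ n) ≤ n := by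
  let P : ℕ → ℕ → Prop := fun n t => ∀ s ≤ t, N s ≤ n
  refine ⟨fun n => Nat.findGreatest (P n) n, tendsto_atTop.2 fun t => ?_, ?_⟩
  · filter_upwards [eventually_ge_atTop t,
      (eventually_all_finset (Finset.range (t + 1))).2 fun s _ => eventually_ge_atTop (N s)]
      with n htn hNn
    exact Nat.le_findGreatest htn fun s hs => hNn s (Finset.mem_range_succ_iff.2 hs)
  · filter_upwards [eventually_ge_atTop (N 0)] with n hn
    exact Nat.findGreatest_spec (P := P n) (Nat.zero_le n)
      (fun s hs => (Nat.le_zero.1 hs) ▸ hn) _ le_rfl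

theorem exists_seq_forall_eventually_of_forall_finset {κ ι : Type*} [Countable κ]
    (Q : κ → ι → ℕ → Prop) (hQ : ∀ S : Finset κ, ∃ i, ∀ᶠ n in atTop, ∀ t ∈ S, Q t i n) :
    ∃ x : ℕ → ι, ∀ t, ∀ᶠ n in atTop, Q t (x n) n := by
  obtain ⟨f, hf⟩ := Countable.exists_injective_nat κ
  have hinit : ∀ T, ∃ i, ∀ᶠ n in atTop, ∀ t, f t ≤ T → Q t i n := fun T => by
    obtain ⟨i, hi⟩ := hQ ((Finset.range (T + 1)).preimage f hf.injOn)
    exact ⟨i, hi.mono fun n hn t ht => hn t (by simpa [Nat.lt_succ_iff] using ht)⟩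
  choose a ha using hinit
  choose N hN using fun T => eventually_atTop.1 (ha T)
  obtain ⟨τ, hτ, hNτ⟩ := Nat.exists_tendsto_atTop_eventually_le N
  refine ⟨a ∘ τ, fun t => ?_⟩
  filter_upwards [hτ.eventually_ge_atTop (f t), hNτ] with n htn hNn
  exact hN _ n hNn t htn

section

variable {Γ : Type*} [Group Γ] {G : ℕ → Type*} [∀ n, Group (G n)]

theorem IsPartialHom.eventually_extend_val_mul {H : Subgroup Γ} {Ψ : ∀ n, H → G n}
    (hΨ : IsPartialHom Ψ) {g h : Γ} (hg : g ∈ H) (hh : h ∈ H) :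
    ∀ᶠ n in atTop, Function.extend Subtype.val (Ψ n) 1 (g * h) =
      Function.extend Subtype.val (Ψ n) 1 g * Function.extend Subtype.val (Ψ n) 1 h := by
  obtain ⟨N, hN⟩ := hΨ ⟨g, hg⟩ ⟨h, hh⟩
  filter_upwards [eventually_ge_atTop N] with n hn
  have hext := Subtype.val_injective.extend_apply (Ψ n) (1 : Γ → G n)
  calc Function.extend Subtype.val (Ψ n) 1 ↑(⟨g, hg⟩ * ⟨h, hh⟩ : H)
      _ = Ψ n (⟨g, hg⟩ * ⟨h, hh⟩) := hext _
      _ = Ψ n ⟨g, hg⟩ * Ψ n ⟨h, hh⟩ := hN n hn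
      _ = _ := by rw [← hext ⟨g, hg⟩, ← hext ⟨h, hh⟩]

variable [∀ n, PseudoMetricSpace (G n)]

def MulAndCloseAt (φ ψ : ∀ n, Γ → G n) (t : Γ × Γ × ℕ) (n : ℕ) : Prop :=
  ψ n (t.1 * t.2.1) = ψ n t.1 * ψ n t.2.1 ∧ dist (φ n t.1) (ψ n t.1) < 1 / (t.2.2 + 1)

theorem isPartialHom_and_tendsto_dist_of_forall_eventually_mulAndCloseAt
    {φ ψ : ∀ n, Γ → G n} (h : ∀ t, ∀ᶠ n in atTop, MulAndCloseAt φ ψ t n) :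
    IsPartialHom ψ ∧ ∀ g, Tendsto (fun n => dist (φ n g) (ψ n g)) atTop (𝓝 0) := by
  refine ⟨fun g h' => eventually_atTop.1 ((h (g, h', 0)).mono fun _ => And.left), fun g => ?_⟩
  refine Metric.nhds_basis_ball_inv_nat_succ.tendsto_right_iff.2 fun m _ => ?_
  filter_upwards [h (g, g, m)] with n hn
  rw [Metric.mem_ball, Real.dist_0_eq_abs, abs_of_nonneg dist_nonneg]
  exact hn.2

theorem eventually_mulAndCloseAt_extend_val {H : Subgroup Γ} {φ : ∀ n, Γ → G n}
    {Ψ : ∀ n, H → G n} (hΨ : IsPartialHom Ψ)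
    (hclose : ∀ s : H, Tendsto (fun n => dist (φ n s) (Ψ n s)) atTop (𝓝 0))
    {g h : Γ} (hg : g ∈ H) (hh : h ∈ H) (m : ℕ) :
    ∀ᶠ n in atTop, MulAndCloseAt φ (fun n => Function.extend Subtype.val (Ψ n) 1) (g, h, m) n := by
  refine (hΨ.eventually_extend_val_mul hg hh).and ?_
  filter_upwards [(hclose ⟨g, hg⟩).eventually_lt_const (by positivity : (0 : ℝ) < 1 / (m + 1))]
    with n hn
  rwa [← Subtype.val_injective.extend_apply (Ψ n) 1] at hn

theorem exists_isPartialHom_tendsto_dist_of_directed [Countable Γ] {ι : Type*} [Nonempty ι]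
    {H : ι → Subgroup Γ} (hdir : Directed (· ≤ ·) H) (hcover : ∀ g, ∃ i, g ∈ H i)
    (φ : ∀ n, Γ → G n) (Ψ : ∀ i n, H i → G n) (hΨ : ∀ i, IsPartialHom (Ψ i))
    (hclose : ∀ i (s : H i), Tendsto (fun n => dist (φ n s) (Ψ i n s)) atTop (𝓝 0)) :
    ∃ ψ : ∀ n, Γ → G n, IsPartialHom ψ ∧
      ∀ g, Tendsto (fun n => dist (φ n g) (ψ n g)) atTop (𝓝 0) := by
  classical
  let Φ : ι → ∀ n, Γ → G n := fun i n => Function.extend Subtype.val (Ψ i n) 1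
  have hfinite : ∀ S : Finset (Γ × Γ × ℕ),
      ∃ i, ∀ᶠ n in atTop, ∀ t ∈ S, MulAndCloseAt φ (Φ i) t n := by
    intro S
    obtain ⟨i, hi⟩ := Directed.exists_mem_subset_of_finset_subset_biUnion
      (f := fun i => (H i : Set Γ)) hdir (s := S.image Prod.fst ∪ S.image (Prod.fst ∘ Prod.snd))
      fun g _ => Set.mem_iUnion.2 (hcover g)
    refine ⟨i, (eventually_all_finset S).2 fun t ht => ?_⟩
    exact eventually_mulAndCloseAt_extend_val (hΨ i) (hclose i)
      (hi (Finset.mem_union_left _ (Finset.mem_image_of_mem _ ht)))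
      (hi (Finset.mem_union_right _ (Finset.mem_image_of_mem _ ht))) t.2.2
  obtain ⟨x, hx⟩ := exists_seq_forall_eventually_of_forall_finset _ hfinite
  exact ⟨fun n => Φ (x n) n, isPartialHom_and_tendsto_dist_of_forall_eventually_mulAndCloseAt hx⟩

end

theorem isLocallyGStable_of_directed_union_general {Γ : Type*} [Group Γ] [Countable Γ]
    (G : ℕ → Type*) [∀ n, Group (G n)] [∀ n, MetricSpace (G n)]
    (H : ℕ → Subgroup Γ)
    (hdir : ∀ i j : ℕ, ∃ l, H i ≤ H l ∧ H j ≤ H l)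
    (hcover : ∀ g : Γ, ∃ i, g ∈ H i)
    (hrel : ∀ i, IsLocallyGStableRel G (H i)) :
    IsLocallyGStable G Γ := by
  intro k φ hφ
  choose Ψ hΨ hclose using fun i => hrel i k φ hφ
  exact exists_isPartialHom_tendsto_dist_of_directed hdir hcover φ Ψ hΨ hclose

/-- If a countable group `Γ` is the directed union of subgroups `Γ_i`, each locally
`G`-stable relative to `Γ`, then `Γ` is locally `G`-stable. -/
theorem isLocallyGStable_of_directed_union {Γ : Type*} [Group Γ] [Countable Γ]
    (G : ℕ → Type*) [∀ n, Group (G n)] [∀ n, MetricSpace (G n)]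
    (hbi : BiInvariantMetrics G) (H : ℕ → Subgroup Γ)
    (hdir : ∀ i j : ℕ, ∃ l, H i ≤ H l ∧ H j ≤ H l)
    (hcover : ∀ g : Γ, ∃ i, g ∈ H i)
    (hrel : ∀ i, IsLocallyGStableRel G (H i)) :
    IsLocallyGStable G Γ :=
  isLocallyGStable_of_directed_union_general G H hdir hcover hrel

end
end

section
/- Let Γ be a countable group such that for every extremal character χ : Γ → ℂ there exists a partial homomorphism ψ_n : Γ → U(k_n) with τ_{k_n}(ψ_n(g)) → χ(g) for all g ∈ Γ. Then the same conclusion holds for every character χ of Γ: there exists a partial homomorphism ψ_n : Γ → U(k_n) with τ_{k_n}(ψ_n(g)) → χ(g) for all g ∈ Γ. -/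
open Filter Matrix
open scoped ComplexOrder

noncomputable section

/-!
Call `χ : Γ → ℂ` locally trace-approximable if on every finite `B ⊆ Γ` it is uniformly
approximated by `τ_k ∘ u` for a map `u : Γ → U(k)` that is multiplicative on `B`. Limits of traces
along partial homomorphisms are locally trace-approximable, and conversely when `Γ` is countable,
by a diagonal argument over an exhaustion of `Γ` by finite sets. These functions form a closed
subset of `ℂ^Γ`, and a convex one: the block sum of `a` copies of `u₁ ⊗ 1` and `b` copies of
`1 ⊗ u₂` has normalized trace `(a τ(u₁) + b τ(u₂)) / (a + b)`, and closedness passes from rational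
to real weights. The characters form a compact convex subset of `ℂ^Γ`, so by Krein–Milman they lie
in the closed convex hull of the extremal characters, which are approximable by hypothesis.
-/

namespace Matrix.UnitaryGroup

variable {m n o α : Type*} [Fintype m] [DecidableEq m] [Fintype n] [DecidableEq n]
  [Fintype o] [DecidableEq o] [CommRing α] [StarRing α]

def reindex (e : m ≃ n) : unitaryGroup m α →* unitaryGroup n α where
  toFun U := ⟨Matrix.reindex e e U, by
    rw [mem_unitaryGroup_iff, star_eq_conjTranspose, conjTranspose_reindex, reindex_apply,
      reindex_apply, submatrix_mul_equiv, ← star_eq_conjTranspose,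
      Unitary.mul_star_self_of_mem U.2, submatrix_one_equiv]⟩
  map_one' := Subtype.ext (submatrix_one_equiv e.symm)
  map_mul' U V := Subtype.ext (submatrix_mul_equiv _ _ _ _ _).symm

def blockDiagonal : (o → unitaryGroup m α) →* unitaryGroup (m × o) α where
  toFun U := ⟨Matrix.blockDiagonal fun i => U i, by
    rw [mem_unitaryGroup_iff, star_eq_conjTranspose, blockDiagonal_conjTranspose,
      ← blockDiagonal_mul]
    simp_rw [← star_eq_conjTranspose, Unitary.mul_star_self_of_mem (SetLike.coe_mem _)]
    exact blockDiagonal_one⟩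
  map_one' := Subtype.ext blockDiagonal_one
  map_mul' U V :=
    Subtype.ext (blockDiagonal_mul (fun i => (U i : Matrix m m α)) fun i => (V i : Matrix m m α))

lemma trace_reindex (e : m ≃ n) (U : unitaryGroup m α) :
    trace (reindex e U : Matrix n n α) = trace (U : Matrix m m α) :=
  Fintype.sum_equiv e.symm _ _ fun _ => rfl

lemma trace_blockDiagonal (U : o → unitaryGroup m α) :
    trace (blockDiagonal U : Matrix (m × o) (m × o) α) = ∑ i, trace (U i : Matrix m m α) :=
  Matrix.trace_blockDiagonal fun i => (U i : Matrix m m α)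

end Matrix.UnitaryGroup

/-- The block sum of `a` copies of `U₁ ⊗ 1_{k₂}` and `b` copies of `1_{k₁} ⊗ U₂`. -/
def unitaryMix {k₁ k₂ : ℕ} (a b : ℕ) (U₁ : UGp k₁) (U₂ : UGp k₂) : UGp (k₁ * k₂ * (a + b)) :=
  UnitaryGroup.reindex ((finProdFinEquiv.prodCongr finSumFinEquiv).trans finProdFinEquiv) <|
    UnitaryGroup.blockDiagonal <|
      Sum.elim (fun _ : Fin a => UnitaryGroup.blockDiagonal fun _ : Fin k₂ => U₁)
        (fun _ : Fin b => UnitaryGroup.reindex (Equiv.prodComm _ _) <|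
          UnitaryGroup.blockDiagonal fun _ : Fin k₁ => U₂)

lemma unitaryMix_mul {k₁ k₂ : ℕ} (a b : ℕ) (U₁ V₁ : UGp k₁) (U₂ V₂ : UGp k₂) :
    unitaryMix a b (U₁ * V₁) (U₂ * V₂) = unitaryMix a b U₁ U₂ * unitaryMix a b V₁ V₂ := by
  simp only [unitaryMix, ← map_mul]
  congr 2
  funext i
  cases i <;> simp only [Pi.mul_apply, Sum.elim_inl, Sum.elim_inr, ← map_mul] <;> rfl

lemma nTrace_unitaryMix {k₁ k₂ : ℕ} (hk₁ : k₁ ≠ 0) (hk₂ : k₂ ≠ 0) (a b : ℕ) (U₁ : UGp k₁)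
    (U₂ : UGp k₂) :
    nTrace (k₁ * k₂ * (a + b)) (unitaryMix a b U₁ U₂) =
      (a * nTrace k₁ U₁ + b * nTrace k₂ U₂) / (a + b) := by
  simp only [nTrace, unitaryMix, UnitaryGroup.trace_reindex, UnitaryGroup.trace_blockDiagonal,
    Fintype.sum_sum_type, Sum.elim_inl, Sum.elim_inr, Finset.sum_const, Finset.card_univ,
    Fintype.card_fin, nsmul_eq_mul]
  push_cast
  field_simp

lemma Matrix.isClosed_setOf_posSemidef {n R : Type*} [Fintype n] [CommRing R] [PartialOrder R]
    [StarRing R] [TopologicalSpace R] [IsTopologicalRing R] [ContinuousStar R]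
    [OrderClosedTopology R] :
    IsClosed {A : Matrix n n R | A.PosSemidef} := by
  simp only [posSemidef_iff_dotProduct_mulVec, Set.ofPred_and, Set.ofPred_forall]
  exact (isClosed_eq continuous_id.matrix_conjTranspose continuous_id).inter <|
    isClosed_iInter fun x => isClosed_le continuous_const <|
      continuous_const.dotProduct (continuous_id.matrix_mulVec continuous_const)

lemma exists_finset_seq_eventually_mem (α : Type*) [Countable α] :
    ∃ B : ℕ → Finset α, ∀ a, ∀ᶠ n in atTop, a ∈ B n := by
  classical
  cases isEmpty_or_nonempty α with
  | inl _ => exact ⟨fun _ => ∅, isEmptyElim⟩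
  | inr _ =>
    obtain ⟨f, hf⟩ := exists_surjective_nat α
    refine ⟨fun n => (Finset.range n).image f, fun a => ?_⟩
    obtain ⟨i, rfl⟩ := hf a
    exact eventually_atTop.2 ⟨i + 1, fun n hn => Finset.mem_image_of_mem f (by simp; omega)⟩

section Characters

variable {Γ : Type*} [Group Γ]

lemma IsCharacter.norm_le_one {χ : Γ → ℂ} (hχ : IsCharacter χ) (g : Γ) : ‖χ g‖ ≤ 1 := by
  have hpsd := hχ.1 2 ![1, g]
  have hinv : χ g⁻¹ = star (χ g) := by simpa using (hpsd.isHermitian.apply 1 0).symm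
  -- the Gram matrix of `(1, g)` has determinant `1 - |χ g|²`
  have hdet : (Complex.normSq (χ g) : ℂ) ≤ 1 := by
    simpa [Matrix.det_fin_two, hχ.2.2, hinv, Complex.mul_conj] using hpsd.det_nonneg
  have : ‖χ g‖ ^ 2 ≤ 1 := by rw [Complex.sq_norm]; exact_mod_cast hdet
  exact (sq_le_one_iff₀ (norm_nonneg _)).1 this

lemma isClosed_setOf_isCharacter : IsClosed {χ : Γ → ℂ | IsCharacter χ} := by
  simp only [IsCharacter, Set.ofPred_and, Set.ofPred_forall]
  refine .inter (isClosed_iInter fun m => isClosed_iInter fun g =>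
      Matrix.isClosed_setOf_posSemidef.preimage ?_)
    (.inter ?_ (isClosed_eq (continuous_apply 1) continuous_const))
  · exact continuous_matrix fun i j => continuous_apply _
  · exact isClosed_iInter fun g => isClosed_iInter fun h =>
      isClosed_eq (continuous_apply _) (continuous_apply _)

lemma isCompact_setOf_isCharacter : IsCompact {χ : Γ → ℂ | IsCharacter χ} :=
  (isCompact_univ_pi fun _ => isCompact_closedBall (0 : ℂ) 1).of_isClosed_subset
    isClosed_setOf_isCharacter fun χ hχ g _ => by simpa using hχ.norm_le_one g

lemma convex_setOf_isCharacter : Convex ℝ {χ : Γ → ℂ | IsCharacter χ} := by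
  rintro χ₁ ⟨hpsd₁, hconj₁, hone₁⟩ χ₂ ⟨hpsd₂, hconj₂, hone₂⟩ s t hs ht hst
  refine ⟨fun m g => ?_, fun g h => by simp [hconj₁ g h, hconj₂ g h], ?_⟩
  · convert ((hpsd₁ m g).smul (Complex.zero_le_real.2 hs)).add
      ((hpsd₂ m g).smul (Complex.zero_le_real.2 ht)) using 1
    ext i j
    simp [Complex.real_smul]
  · simp only [Pi.add_apply, Pi.smul_apply, Complex.real_smul, hone₁, hone₂, mul_one]
    exact_mod_cast hst

lemma isExtremalCharacter_of_mem_extremePoints {χ : Γ → ℂ}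
    (hχ : χ ∈ Set.extremePoints ℝ {χ : Γ → ℂ | IsCharacter χ}) : IsExtremalCharacter χ := by
  refine ⟨hχ.1, fun t χ₁ χ₂ ht₀ ht₁ h₁ h₂ hχ' => ?_⟩
  have hseg : χ ∈ openSegment ℝ χ₁ χ₂ := ⟨t, 1 - t, ht₀, by linarith, by ring, by
    funext g
    simp [Complex.real_smul, hχ' g]⟩
  exact ⟨hχ.2 h₁ h₂ hseg, hχ.2 h₂ h₁ (openSegment_symm ℝ χ₁ χ₂ ▸ hseg)⟩

end Characters

section TraceApproximation

variable {Γ : Type*} [Group Γ]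

def IsPartialHomTraceLimit (χ : Γ → ℂ) : Prop :=
  ∃ (k : ℕ → ℕ) (ψ : ∀ n, Γ → UGp (k n)), IsPartialHom ψ ∧
    ∀ g : Γ, Tendsto (fun n => nTrace (k n) (ψ n g)) atTop (nhds (χ g))

/-- The condition `k ≠ 0` excludes the junk value `nTrace 0 _ = 0`; block sums need it. -/
def IsLocallyTraceApproximable (χ : Γ → ℂ) : Prop :=
  ∀ (B : Finset Γ) (ε : ℝ), 0 < ε → ∃ (k : ℕ) (u : Γ → UGp k), k ≠ 0 ∧
    (∀ g ∈ B, ∀ h ∈ B, u (g * h) = u g * u h) ∧ ∀ g ∈ B, dist (nTrace k (u g)) (χ g) ≤ ε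

lemma IsPartialHomTraceLimit.isLocallyTraceApproximable {χ : Γ → ℂ}
    (hχ : IsPartialHomTraceLimit χ) (hχ₁ : χ 1 = 1) : IsLocallyTraceApproximable χ := by
  obtain ⟨k, ψ, hψ, hlim⟩ := hχ
  intro B ε hε
  have hmul : ∀ᶠ n in atTop, ∀ g ∈ B, ∀ h ∈ B, ψ n (g * h) = ψ n g * ψ n h :=
    (eventually_all_finset B).2 fun g _ => (eventually_all_finset B).2 fun h _ =>
      eventually_atTop.2 (hψ g h)
  have hdist : ∀ᶠ n in atTop, ∀ g ∈ B, dist (nTrace (k n) (ψ n g)) (χ g) ≤ ε :=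
    (eventually_all_finset B).2 fun g _ => (hlim g).eventually (Metric.closedBall_mem_nhds _ hε)
  have hk : ∀ᶠ n in atTop, k n ≠ 0 := by
    filter_upwards [(hlim 1).eventually_ne (hχ₁ ▸ one_ne_zero)] with n hn hkn
    exact hn (by simp [nTrace, hkn])
  obtain ⟨n, hkn, hmuln, hdistn⟩ := (hk.and (hmul.and hdist)).exists
  exact ⟨k n, ψ n, hkn, hmuln, hdistn⟩

lemma IsLocallyTraceApproximable.isPartialHomTraceLimit [Countable Γ] {χ : Γ → ℂ}
    (hχ : IsLocallyTraceApproximable χ) : IsPartialHomTraceLimit χ := by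
  obtain ⟨B, hB⟩ := exists_finset_seq_eventually_mem Γ
  choose k u _ hmul hdist using fun n : ℕ => hχ (B n) (1 / (n + 1)) Nat.one_div_pos_of_nat
  refine ⟨k, u, fun g h => eventually_atTop.1 ?_, fun g => ?_⟩
  · filter_upwards [hB g, hB h] with n hg hh using hmul n g hg h hh
  · refine tendsto_iff_dist_tendsto_zero.2 <|
      squeeze_zero' (.of_forall fun _ => dist_nonneg) ?_ tendsto_one_div_add_atTop_nhds_zero_nat
    filter_upwards [hB g] with n hg using hdist n g hg

lemma isClosed_setOf_isLocallyTraceApproximable :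
    IsClosed {χ : Γ → ℂ | IsLocallyTraceApproximable χ} := by
  refine isClosed_iff_frequently.2 fun χ hχ B ε hε => ?_
  have hnear : ∀ᶠ φ in nhds χ, ∀ g ∈ B, dist (φ g) (χ g) < ε / 2 :=
    (eventually_all_finset B).2 fun g _ =>
      (continuous_apply g).continuousAt.eventually_mem (Metric.ball_mem_nhds (χ g) (half_pos hε))
  obtain ⟨φ, hφχ, hφ⟩ := (hnear.and_frequently hχ).exists
  obtain ⟨k, u, hk, hmul, hdist⟩ := hφ B (ε / 2) (half_pos hε)
  refine ⟨k, u, hk, hmul, fun g hg => ?_⟩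
  linarith [dist_triangle (nTrace k (u g)) (φ g) (χ g), hdist g hg, hφχ g hg]

lemma IsLocallyTraceApproximable.natCast_average {χ₁ χ₂ : Γ → ℂ}
    (h₁ : IsLocallyTraceApproximable χ₁) (h₂ : IsLocallyTraceApproximable χ₂) {a b : ℕ}
    (hab : a + b ≠ 0) :
    IsLocallyTraceApproximable fun g => (a * χ₁ g + b * χ₂ g) / (a + b) := by
  intro B ε hε
  obtain ⟨k₁, u₁, hk₁, hmul₁, hdist₁⟩ := h₁ B ε hε
  obtain ⟨k₂, u₂, hk₂, hmul₂, hdist₂⟩ := h₂ B ε hε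
  refine ⟨_, fun g => unitaryMix a b (u₁ g) (u₂ g), by positivity, fun g hg h hh => ?_,
    fun g hg => ?_⟩
  · dsimp only
    rw [hmul₁ g hg h hh, hmul₂ g hg h hh, unitaryMix_mul]
  have hweight (n : ℕ) (z w : ℂ) (h : dist z w ≤ ε) : ‖(n : ℂ) * (z - w)‖ ≤ n * ε := by
    rw [norm_mul, Complex.norm_natCast, ← dist_eq_norm]
    exact mul_le_mul_of_nonneg_left h n.cast_nonneg
  rw [nTrace_unitaryMix hk₁ hk₂, dist_eq_norm, ← sub_div, norm_div,
    div_le_iff₀ (norm_pos_iff.2 (by exact_mod_cast hab))]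
  calc ‖(a : ℂ) * nTrace k₁ (u₁ g) + b * nTrace k₂ (u₂ g) - (a * χ₁ g + b * χ₂ g)‖
      = ‖(a : ℂ) * (nTrace k₁ (u₁ g) - χ₁ g) + b * (nTrace k₂ (u₂ g) - χ₂ g)‖ := by ring_nf
    _ ≤ a * ε + b * ε :=
      norm_add_le_of_le (hweight a _ _ (hdist₁ g hg)) (hweight b _ _ (hdist₂ g hg))
    _ = ε * ‖(a + b : ℂ)‖ := by rw [← Nat.cast_add, Complex.norm_natCast]; push_cast; ring

lemma convex_setOf_isLocallyTraceApproximable :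
    Convex ℝ {χ : Γ → ℂ | IsLocallyTraceApproximable χ} := by
  intro χ₁ h₁ χ₂ h₂ s t hs ht hst
  -- approximate the weight `s` by `⌊s n⌋₊ / n`
  set a : ℕ → ℕ := fun n => ⌊s * n⌋₊
  have ha (n : ℕ) : a n ≤ n :=
    Nat.floor_le_of_le (mul_le_of_le_one_left n.cast_nonneg (by linarith))
  have hlim : Tendsto (fun n : ℕ => ((a n / n : ℝ) : ℂ)) atTop (nhds (s : ℂ)) :=
    (Complex.continuous_ofReal.tendsto s).comp
      ((tendsto_nat_floor_mul_div_atTop hs).comp tendsto_natCast_atTop_atTop)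
  refine isClosed_setOf_isLocallyTraceApproximable.mem_of_tendsto
    (f := fun n g => (a n * χ₁ g + (n - a n : ℕ) * χ₂ g) / (a n + (n - a n : ℕ))) ?_
    (eventually_atTop.2 ⟨1, fun n hn => h₁.natCast_average h₂ (by omega)⟩)
  refine tendsto_pi_nhds.2 fun g => ?_
  have hcomb := (hlim.mul_const (χ₁ g)).add
    (((tendsto_const_nhds (x := (1 : ℂ))).sub hlim).mul_const (χ₂ g))
  rw [show t = 1 - s by linarith]
  simp only [Pi.add_apply, Pi.smul_apply, Complex.real_smul, Complex.ofReal_sub,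
    Complex.ofReal_one]
  refine hcomb.congr' (eventually_atTop.2 ⟨1, fun n hn => ?_⟩)
  have hn : (n : ℂ) ≠ 0 := by exact_mod_cast (by omega : n ≠ 0)
  dsimp only
  rw [← Nat.cast_add, Nat.add_sub_cancel' (ha n), Nat.cast_sub (ha n)]
  push_cast
  field_simp

end TraceApproximation

/-- If every extremal character of `Γ` is a pointwise limit of normalized traces
along a partial homomorphism into unitary groups, then the same holds for every
character of `Γ`. -/
theorem character_criterion_of_extremal (Γ : Type*) [Group Γ] [Countable Γ]
    (h : ∀ χ : Γ → ℂ, IsExtremalCharacter χ →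
      ∃ (k : ℕ → ℕ) (ψ : ∀ n, Γ → UGp (k n)), IsPartialHom ψ ∧
        ∀ g : Γ, Filter.Tendsto (fun n => nTrace (k n) (ψ n g)) Filter.atTop (nhds (χ g))) :
    ∀ χ : Γ → ℂ, IsCharacter χ →
      ∃ (k : ℕ → ℕ) (ψ : ∀ n, Γ → UGp (k n)), IsPartialHom ψ ∧
        ∀ g : Γ, Filter.Tendsto (fun n => nTrace (k n) (ψ n g)) Filter.atTop (nhds (χ g)) := by
  have hchar : {χ : Γ → ℂ | IsCharacter χ} ⊆ {χ | IsLocallyTraceApproximable χ} := by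
    rw [← closure_convexHull_extremePoints isCompact_setOf_isCharacter convex_setOf_isCharacter]
    refine closure_minimal (convexHull_min (fun χ hχ => ?_)
      convex_setOf_isLocallyTraceApproximable) isClosed_setOf_isLocallyTraceApproximable
    have hext := isExtremalCharacter_of_mem_extremePoints hχ
    exact IsPartialHomTraceLimit.isLocallyTraceApproximable (h χ hext) hext.1.2.2
  exact fun χ hχ => (hchar hχ).isPartialHomTraceLimit

end
end

section
/- Every finite-dimensional unitary representation of the group A_∞ of finitely supported even permutations of ℕ is trivial; consequently, every finite-dimensional unitary representation of the group S_∞ of finitely supported permutations of ℕ factors through its abelianization ℤ/2ℤ, i.e. through the sign homomorphism. -/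
/-!
A representation of the elementary abelian group `(ℤ/2)^m` on a `d`-dimensional space
decomposes along characters, at most `d²` of which occur; as these characters are `±1`-valued,
the representation is not faithful once `m > d²`. Every finite group, in particular `(ℤ/2)^m`,
embeds in `A_∞`, so every finite-dimensional representation of `A_∞` has a nontrivial kernel.
But `A_∞` is simple, being the directed union of the simple groups `A_n`, `n ≥ 5`; hence the
representation is trivial. A representation of `S_∞` is then trivial on `A_∞`.
-/

open Filter Matrix
open scoped ComplexOrder

noncomputable section

/-- The group `S_∞` of finitely supported permutations of `ℕ`, as a subgroup of
`Equiv.Perm ℕ`. -/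
def SInf : Subgroup (Equiv.Perm ℕ) where
  carrier := {σ | {x : ℕ | σ x ≠ x}.Finite}
  one_mem' := by simp
  mul_mem' := by
    intro σ τ hσ hτ
    refine (hσ.union hτ).subset ?_
    intro x hx
    simp only [Set.mem_setOf_eq, Equiv.Perm.mul_apply] at hx
    by_contra h
    simp only [Set.mem_union, Set.mem_setOf_eq, not_or, not_not] at h
    exact hx (by rw [h.2, h.1])
  inv_mem' := by
    intro σ hσ
    refine hσ.subset ?_
    intro x hx
    simp only [Set.mem_setOf_eq] at hx ⊢
    intro h
    exact hx (Equiv.Perm.inv_eq_iff_eq.mpr h.symm)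

/-- The embedding `Sym(n) → Sym(ℕ)` extending permutations of `{0, …, n-1}` by the
identity. -/
def embedPerm (n : ℕ) : Equiv.Perm (Fin n) →* Equiv.Perm ℕ :=
  Equiv.Perm.extendDomainHom (Fin.equivSubtype)

/-- The group `A_∞` of finitely supported even permutations of `ℕ`: the union of
the (images of the) finite alternating groups `A_n`. -/
def AInf : Subgroup (Equiv.Perm ℕ) :=
  ⨆ n : ℕ, Subgroup.map (embedPerm n) (alternatingGroup (Fin n))

open Equiv Equiv.Perm

theorem OrthogonalIdempotents.linearIndependent {K A ι : Type*} [Field K] [Ring A]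
    [Algebra K A] {e : ι → A} (he : OrthogonalIdempotents e) (hne : ∀ i, e i ≠ 0) :
    LinearIndependent K e := by
  classical
  refine linearIndependent_iff'.2 fun s c hs i hi => ?_
  have h := congrArg (· * e i) hs
  simp only [Finset.sum_mul, smul_mul_assoc, he.mul_eq, smul_ite, smul_zero,
    Finset.sum_ite_eq', if_pos hi, zero_mul] at h
  exact (smul_eq_zero.1 h).resolve_right (hne i)

section IsotypicProj

variable {G A : Type*} [AddCommGroup G] [Fintype G] [Ring A] [Algebra ℂ A]
  (F : Multiplicative G →* A)

def isotypicProj (ψ : AddChar G ℂ) : A :=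
  (Fintype.card G : ℂ)⁻¹ • ∑ g, ψ (-g) • F (.ofAdd g)

lemma map_mul_isotypicProj (a : G) (ψ : AddChar G ℂ) :
    F (.ofAdd a) * isotypicProj F ψ = ψ a • isotypicProj F ψ := by
  have reindex : ∑ g, ψ (-g) • F (.ofAdd (a + g)) = ∑ g, ψ a • ψ (-g) • F (.ofAdd g) :=
    Fintype.sum_equiv (Equiv.addLeft a) _ _ fun g => by
      rw [Equiv.coe_addLeft, smul_smul, ← AddChar.map_add_eq_mul, neg_add, add_neg_cancel_left]
  simp only [isotypicProj, mul_smul_comm, Finset.mul_sum, ← map_mul, ← ofAdd_add, reindex]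
  rw [← Finset.smul_sum, smul_comm]

lemma isotypicProj_mul_isotypicProj (ψ χ : AddChar G ℂ) :
    isotypicProj F ψ * isotypicProj F χ = if ψ = χ then isotypicProj F χ else 0 := by
  have key : isotypicProj F ψ * isotypicProj F χ
      = ((Fintype.card G : ℂ)⁻¹ * ∑ g, (χ - ψ) g) • isotypicProj F χ := by
    rw [isotypicProj, smul_mul_assoc, Finset.sum_mul, mul_smul, Finset.sum_smul]
    congr 1
    refine Finset.sum_congr rfl fun g _ => ?_
    rw [smul_mul_assoc, map_mul_isotypicProj, smul_smul, AddChar.sub_apply, mul_comm]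
  rw [key, AddChar.sum_eq_ite]
  simp only [sub_eq_zero, eq_comm (a := χ)]
  split_ifs
  · rw [inv_mul_cancel₀ (by simp), one_smul]
  · rw [mul_zero, zero_smul]

lemma sum_isotypicProj : ∑ ψ, isotypicProj F ψ = 1 := by
  classical
  simp only [isotypicProj, ← Finset.smul_sum]
  rw [Finset.sum_comm]
  simp only [← Finset.sum_smul, AddChar.sum_apply_eq_ite, neg_eq_zero, ite_smul, zero_smul,
    Finset.sum_ite_eq', Finset.mem_univ, if_true, ofAdd_zero, map_one, smul_smul]
  rw [inv_mul_cancel₀ (by simp), one_smul]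

lemma map_eq_sum_smul_isotypicProj (a : G) :
    F (.ofAdd a) = ∑ ψ, ψ a • isotypicProj F ψ := by
  rw [← mul_one (F _), ← sum_isotypicProj F, Finset.mul_sum]
  exact Finset.sum_congr rfl fun ψ _ => map_mul_isotypicProj F a ψ

lemma natCard_isotypicProj_ne_zero_le_finrank [FiniteDimensional ℂ A] :
    Nat.card {ψ : AddChar G ℂ // isotypicProj F ψ ≠ 0} ≤ Module.finrank ℂ A := by
  classical
  have hortho : OrthogonalIdempotents
      fun ψ : {ψ : AddChar G ℂ // isotypicProj F ψ ≠ 0} => isotypicProj F ψ :=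
    ⟨fun ψ => by simp [IsIdempotentElem, isotypicProj_mul_isotypicProj],
      fun ψ χ h => by simp [isotypicProj_mul_isotypicProj, Subtype.coe_ne_coe.2 h]⟩
  rw [Nat.card_eq_fintype_card]
  exact (hortho.linearIndependent fun ψ => ψ.2).fintype_card_le_finrank

theorem not_injective_of_two_pow_finrank_lt_card [FiniteDimensional ℂ A]
    (hG : ∀ g : G, g + g = 0) (hcard : 2 ^ Module.finrank ℂ A < Fintype.card G) :
    ¬ Function.Injective F := by
  classical
  let S := {ψ : AddChar G ℂ // isotypicProj F ψ ≠ 0}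
  have hS : Fintype.card (S → Bool) < Fintype.card G := by
    rw [Fintype.card_fun, Fintype.card_bool, ← Nat.card_eq_fintype_card]
    exact (Nat.pow_le_pow_right two_pos (natCard_isotypicProj_ne_zero_le_finrank F)).trans_lt hcard
  obtain ⟨a, b, hab, hsame⟩ :=
    Fintype.exists_ne_map_eq_of_card_lt (fun g (ψ : S) => decide (ψ.1 g = 1)) hS
  have hpm : ∀ (ψ : AddChar G ℂ) g, ψ g = 1 ∨ ψ g = -1 := fun ψ g =>
    mul_self_eq_one_iff.1 (by rw [← AddChar.map_add_eq_mul, hG, AddChar.map_zero_eq_one])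
  have hchar : ∀ ψ : AddChar G ℂ, isotypicProj F ψ ≠ 0 → ψ a = ψ b := fun ψ hψ => by
    have h := congrFun hsame ⟨ψ, hψ⟩
    simp only [decide_eq_decide] at h
    rcases hpm ψ a with ha | ha <;> rcases hpm ψ b with hb | hb <;> simp_all
  intro hF
  refine hab (Multiplicative.ofAdd.injective (hF ?_))
  rw [map_eq_sum_smul_isotypicProj, map_eq_sum_smul_isotypicProj]
  refine Finset.sum_congr rfl fun ψ _ => ?_
  by_cases hψ : isotypicProj F ψ = 0
  · rw [hψ, smul_zero, smul_zero]
  · rw [hchar ψ hψ]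

end IsotypicProj

theorem Subgroup.isSimpleGroup_iSup {G ι : Type*} [Group G] [Nonempty ι]
    {H : ι → Subgroup G} (hH : Directed (· ≤ ·) H) (hsimple : ∀ i, IsSimpleGroup (H i)) :
    IsSimpleGroup ↥(⨆ i, H i) := by
  have hle : ∀ i, H i ≤ ⨆ i, H i := le_iSup H
  have hmem : ∀ x : ↥(⨆ i, H i), ∃ i, (x : G) ∈ H i := fun x =>
    (Subgroup.mem_iSup_of_directed hH).1 x.2
  have : Nontrivial ↥(⨆ i, H i) := by
    obtain ⟨i⟩ := ‹Nonempty ι›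
    have := hsimple i
    exact (Subgroup.inclusion_injective (hle i)).nontrivial
  refine ⟨fun N hN => (Subgroup.bot_or_exists_ne_one N).imp_right fun ⟨x, hxN, hx⟩ => ?_⟩
  obtain ⟨j, hxj⟩ := hmem x
  refine eq_top_iff.2 fun y _ => ?_
  obtain ⟨i, hyi⟩ := hmem y
  obtain ⟨k, hik, hjk⟩ := hH i j
  have hNk : N.comap (Subgroup.inclusion (hle k)) = ⊤ := by
    have := hsimple k
    refine (hN.comap _).eq_bot_or_eq_top.resolve_left fun h => hx ?_
    have hx' : (⟨x, hjk hxj⟩ : H k) ∈ N.comap (Subgroup.inclusion (hle k)) := hxN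
    rw [h, Subgroup.mem_bot] at hx'
    exact Subtype.ext (congrArg Subtype.val hx' :)
  have hy : (⟨y, hik hyi⟩ : H k) ∈ N.comap (Subgroup.inclusion (hle k)) := hNk ▸ trivial
  exact hy

lemma embedPerm_apply_of_lt {n x : ℕ} (σ : Perm (Fin n)) (hx : x < n) :
    embedPerm n σ x = σ ⟨x, hx⟩ :=
  extendDomain_apply_subtype σ Fin.equivSubtype hx

lemma embedPerm_apply_of_le {n x : ℕ} (σ : Perm (Fin n)) (hx : n ≤ x) :
    embedPerm n σ x = x :=
  extendDomain_apply_not_subtype σ Fin.equivSubtype (Nat.not_lt.2 hx)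

lemma embedPerm_injective (n : ℕ) : Function.Injective (embedPerm n) :=
  extendDomainHom_injective _

lemma embedPerm_viaFintypeEmbedding {n n' : ℕ} (h : n ≤ n') (σ : Perm (Fin n)) :
    embedPerm n' (σ.viaFintypeEmbedding (Fin.castLEEmb h)) = embedPerm n σ := by
  ext x
  rcases lt_or_ge x n with hxn | hxn
  · rw [embedPerm_apply_of_lt _ (hxn.trans_le h), embedPerm_apply_of_lt _ hxn]
    exact congrArg Fin.val (viaFintypeEmbedding_apply_image σ (Fin.castLEEmb h) ⟨x, hxn⟩)
  rw [embedPerm_apply_of_le _ hxn]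
  rcases lt_or_ge x n' with hxn' | hxn'
  · rw [embedPerm_apply_of_lt _ hxn', viaFintypeEmbedding_apply_notMem_range]
    rintro ⟨y, hy⟩
    exact (y.2.trans_le hxn).ne (congrArg Fin.val hy)
  · exact embedPerm_apply_of_le _ hxn'

lemma monotone_map_embedPerm_alternatingGroup :
    Monotone fun n => (alternatingGroup (Fin n)).map (embedPerm n) := by
  intro n n' h σ hσ
  obtain ⟨τ, hτ, rfl⟩ := Subgroup.mem_map.1 hσ
  exact ⟨_, by simpa [mem_alternatingGroup] using hτ, embedPerm_viaFintypeEmbedding h τ⟩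

lemma map_embedPerm_le_AInf {n : ℕ} : (alternatingGroup (Fin n)).map (embedPerm n) ≤ AInf :=
  le_iSup (fun n => (alternatingGroup (Fin n)).map (embedPerm n)) n

lemma AInf_le_SInf : AInf ≤ SInf := by
  refine iSup_le fun n σ hσ => ?_
  obtain ⟨τ, -, rfl⟩ := Subgroup.mem_map.1 hσ
  exact (Set.finite_Iio n).subset fun x hx =>
    Nat.not_le.1 fun hnx => hx (embedPerm_apply_of_le τ hnx)

instance isSimpleGroup_AInf : IsSimpleGroup AInf := by
  have hmono := monotone_map_embedPerm_alternatingGroup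
  rw [AInf, ← hmono.iSup_nat_add 5]
  refine Subgroup.isSimpleGroup_iSup
    (hmono.comp fun _ _ h => Nat.add_le_add_right h 5).directed_le fun n => ?_
  have := alternatingGroup.isSimpleGroup (α := Fin (n + 5)) (by simp)
  exact ((alternatingGroup _).equivMapOfInjective _ (embedPerm_injective _)).symm.isSimpleGroup

/- `σ ⊕ σ` is always even, so the doubled regular representation lands in `A_∞`. -/
theorem exists_injective_monoidHom_AInf (H : Type*) [Group H] [Finite H] :
    ∃ f : H →* AInf, Function.Injective f := by
  classical
  cases nonempty_fintype H
  let e := Fintype.equivFin (H ⊕ H)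
  let ρ : H →* Perm (Fin (Fintype.card (H ⊕ H))) :=
    e.permCongrHom.toMonoidHom.comp ((sumCongrHom H H).comp
      ((MulAction.toPermHom H H).prod (MulAction.toPermHom H H)))
  have hρ_apply : ∀ g, ρ g (e (.inl 1)) = e (.inl g) := fun g => by simp [ρ]
  have hρ_even : ∀ g, embedPerm _ (ρ g) ∈ AInf := fun g => by
    refine map_embedPerm_le_AInf (Subgroup.mem_map_of_mem _ ?_)
    simp [ρ, mem_alternatingGroup, sign_sumCongr]
  refine ⟨((embedPerm _).comp ρ).codRestrict AInf hρ_even, fun g g' hg => ?_⟩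
  have hρ : ρ g = ρ g' := embedPerm_injective _ (congrArg Subtype.val hg)
  simpa [hρ_apply] using DFunLike.congr_fun hρ (e (.inl 1))

theorem monoidHom_AInf_eq_one {A : Type*} [Ring A] [Algebra ℂ A] [FiniteDimensional ℂ A]
    (π : AInf →* A) : π = 1 := by
  obtain ⟨E, hE⟩ :=
    exists_injective_monoidHom_AInf (Multiplicative (Fin (Module.finrank ℂ A + 1) → ZMod 2))
  have hπ : ¬ Function.Injective π := fun hπ =>
    not_injective_of_two_pow_finrank_lt_card (π.comp E)
      (fun g => funext fun i => CharTwo.add_self_eq_zero (g i))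
      (by simp [Nat.pow_lt_pow_right]) (hπ.comp hE)
  rw [← MonoidHom.ker_eq_top_iff]
  exact π.normal_ker.eq_bot_or_eq_top.resolve_left fun h => hπ ((π.ker_eq_bot_iff).1 h)

/-- Every finite-dimensional unitary representation of `A_∞` is trivial;
consequently every finite-dimensional unitary representation of `S_∞` descends to
the quotient by `A_∞`, i.e. factors through the abelianization `S_∞/A_∞ ≅ ℤ/2ℤ`
(the sign homomorphism). -/
theorem aInf_representations_trivial_and_sInf_representations_factor_through_sign :
    (∀ (d : ℕ) (π : ↥AInf →* UGp d), ∀ σ : ↥AInf, π σ = 1) ∧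
    (∀ (d : ℕ) (π : ↥SInf →* UGp d), ∀ σ τ : ↥SInf,
      ((σ * τ⁻¹ : ↥SInf) : Equiv.Perm ℕ) ∈ AInf → π σ = π τ) := by
  have hA : ∀ (d : ℕ) (π : ↥AInf →* UGp d) (σ : ↥AInf), π σ = 1 := fun d π σ =>
    Subtype.ext (DFunLike.congr_fun (monoidHom_AInf_eq_one ((unitary _).subtype.comp π)) σ)
  refine ⟨hA, fun d π σ τ h => ?_⟩
  rw [← mul_inv_eq_one, ← map_inv, ← map_mul]
  exact hA d (π.comp (Subgroup.inclusion AInf_le_SInf)) ⟨_, h⟩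

end
end
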